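/- Strictly decreasing colors along alternating reliable extensions: if v and vz are both u-reliable with v a proper prefix of vz, and u·v^ω ∈ L iff u·(vz)^ω ∉ L, then col_u(v) > col_u(vz). -/

import Mathlib

open scoped Classical

/-- Concatenation of a finite word with an infinite word. -/
def wcat {A : Type} (u : List A) (w : ℕ → A) : ℕ → A :=
  fun n => if h : n < u.length then u.get ⟨n, h⟩ else w (n - u.length)

/-- The infinite periodic word `v^ω`. -/
def wpow {A : Type} [Inhabited A] (v : List A) : ℕ → A :=
  fun n => v.getD (n % v.length) default

/-- The ultimately periodic word `u · v^ω`. -/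
def upw {A : Type} [Inhabited A] (u v : List A) : ℕ → A := wcat u (wpow v)

/-- The finite word `v^i`. -/
def wrep {A : Type} (v : List A) (i : ℕ) : List A := (List.replicate i v).flatten

/-- The right congruence `x ∼_L y`. -/
def simL {A : Type} (L : Set (ℕ → A)) (x y : List A) : Prop :=
  ∀ w : ℕ → A, wcat x w ∈ L ↔ wcat y w ∈ L

/-- `w` is `u`-invariant: `u ∼_L u·w`. -/
def UInv {A : Type} (L : Set (ℕ → A)) (u w : List A) : Prop := simL L u (u ++ w)

/-- `v` is relevant to `u`. -/
def URel {A : Type} (L : Set (ℕ → A)) (u v : List A) : Prop :=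
  ∃ z : List A, UInv L u (v ++ z)

/-- `v` has natural color at most `c` wrt `u`. -/
def ColorAtMost {A : Type} [Inhabited A] (L : Set (ℕ → A)) (u : List A) :
    ℕ → List A → Prop
  | c, v => ∀ z : List A, UInv L u (v ++ z) →
      ((upw u (v ++ z) ∈ L ↔ Even c) ∨
        ∃ i : ℕ, 0 < i ∧ ∃ c' : Fin c, ColorAtMost L u c' (wrep (v ++ z) i))
  termination_by c => c
  decreasing_by exact c'.isLt

/-- The natural color of the finite word `v` wrt `u`: `⊥` (i.e. `-∞`) if `v` is
irrelevant to `u`, and otherwise the minimal `c ≥ 0` as in the paper. -/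
noncomputable def ncol {A : Type} [Inhabited A] (L : Set (ℕ → A)) (u v : List A) :
    WithBot ℕ :=
  if URel L u v then ((sInf {c : ℕ | ColorAtMost L u c v} : ℕ) : WithBot ℕ) else ⊥

/-- `v` is stable wrt `u`. -/
def Stable {A : Type} [Inhabited A] (L : Set (ℕ → A)) (u v : List A) : Prop :=
  ∀ i : ℕ, 0 < i → ncol L u v = ncol L u (wrep v i)

/-- `v` is `u`-reliable. -/
def UReliable {A : Type} [Inhabited A] (L : Set (ℕ → A)) (u v : List A) : Prop :=
  UInv L u v ∧ Stable L u v

/-- The natural color of an ultimately periodic infinite word. -/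
noncomputable def icol {A : Type} [Inhabited A] (L : Set (ℕ → A)) (w : ℕ → A) : ℕ :=
  sInf {c : ℕ | ∃ u v : List A, v ≠ [] ∧ w = upw u v ∧ UInv L u v ∧
    ncol L u v = (c : WithBot ℕ)}

/-- The set of states visited infinitely often by a run. -/
def infSet {Q : Type} (r : ℕ → Q) : Set Q := {q | ∀ n : ℕ, ∃ m : ℕ, n ≤ m ∧ r m = q}

/-- The run of a complete deterministic automaton on an infinite word. -/
def runOf {A Q : Type} (δ : Q → A → Q) (q0 : Q) (w : ℕ → A) : ℕ → Q
  | 0 => q0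
  | n + 1 => δ (runOf δ q0 w n) (w n)

/-- `L` is ω-regular: recognized by some deterministic Muller automaton. -/
def OmegaRegular {A : Type} (L : Set (ℕ → A)) : Prop :=
  ∃ (Q : Type) (_ : Fintype Q) (q0 : Q) (δ : Q → A → Q) (α : Set (Set Q)),
    ∀ w : ℕ → A, w ∈ L ↔ infSet (runOf δ q0 w) ∈ α


/-- `x` is a proper prefix of `y`. -/
def PPrefix {A : Type} (x y : List A) : Prop := x <+: y ∧ x ≠ y

/-!
Colors can only drop under extension, and the color of a reliable word is even iff
`u · v^ω ∈ L`, so alternating membership forces a strict drop. The real work is that colors are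
finite at all (otherwise `sInf ∅ = 0` is junk). Run a deterministic Muller automaton for `L` and
pass to the finite monoid of transition profiles: for a word with idempotent profile `e`,
membership of `u · w^ω` is read off `e`. Extending a `u`-invariant word and taking an idempotent
power gives `e'` with `e * e' = e'`; if acceptance flips, then `e' * e ≠ e` (else rotating the
`u`-invariant period would flip it too), so `{f | e' * f = f} ⊂ {f | e * f = f}`. Hence twice the
size of this set, plus a parity bit, bounds the color.
-/

section Words

variable {A : Type}

@[simp]
theorem wcat_nil (w : ℕ → A) : wcat [] w = w := by
  funext n
  simp [wcat]

theorem wcat_append (x y : List A) (w : ℕ → A) : wcat (x ++ y) w = wcat x (wcat y w) := by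
  funext n
  simp only [wcat, List.length_append, List.get_eq_getElem]
  by_cases hx : n < x.length
  · rw [dif_pos (by omega), dif_pos hx, List.getElem_append_left hx]
  · rw [dif_neg hx]
    by_cases hxy : n < x.length + y.length
    · rw [dif_pos hxy, dif_pos (by omega), List.getElem_append_right (by omega)]
    · rw [dif_neg hxy, dif_neg (by omega), Nat.sub_sub]

theorem wcat_cons_zero (a : A) (x : List A) (w : ℕ → A) : wcat (a :: x) w 0 = a := by
  simp [wcat]

theorem wcat_cons_succ (a : A) (x : List A) (w : ℕ → A) :
    (fun n => wcat (a :: x) w (n + 1)) = wcat x w := by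
  funext n
  simp only [wcat, List.length_cons, List.get_eq_getElem, List.getElem_cons_succ]
  split_ifs <;> first | rfl | omega | (congr 1; omega)

theorem eq_of_eq_wcat_of_eq_wcat {v : List A} (hv : v ≠ []) {s t : ℕ → A}
    (hs : s = wcat v s) (ht : t = wcat v t) : s = t := by
  funext n
  induction n using Nat.strong_induction_on with
  | _ n ih =>
    rw [hs, ht]
    simp only [wcat]
    split_ifs with hn
    · rfl
    · exact ih _ (by have := List.length_pos_iff.mpr hv; omega)

variable [Inhabited A]

theorem wpow_eq_wcat (v : List A) : wpow v = wcat v (wpow v) := by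
  funext n
  simp only [wpow, wcat, List.get_eq_getElem]
  split_ifs with hn
  · rw [Nat.mod_eq_of_lt hn, List.getD_eq_getElem]
  · rw [← Nat.mod_eq_sub_mod (by omega)]

theorem wpow_append (x y : List A) : wpow (x ++ y) = wcat x (wpow (y ++ x)) := by
  rcases eq_or_ne (x ++ y) [] with hxy | hxy
  · obtain ⟨rfl, rfl⟩ := List.append_eq_nil_iff.mp hxy
    simp
  · refine eq_of_eq_wcat_of_eq_wcat hxy (wpow_eq_wcat _) ?_
    rw [wcat_append, ← wcat_append y x, ← wpow_eq_wcat]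

end Words

section Repetition

variable {A : Type}

theorem wrep_succ (v : List A) (k : ℕ) : wrep v (k + 1) = v ++ wrep v k := by
  simp [wrep, List.replicate_succ]

@[simp]
theorem wrep_one (v : List A) : wrep v 1 = v := by
  simp [wrep]

theorem wrep_ne_nil {v : List A} (hv : v ≠ []) {k : ℕ} (hk : 0 < k) : wrep v k ≠ [] := by
  obtain ⟨k, rfl⟩ := Nat.exists_eq_add_of_lt hk
  simp [wrep_succ, hv]

variable [Inhabited A]

theorem wcat_wrep_wpow (v : List A) (k : ℕ) : wcat (wrep v k) (wpow v) = wpow v := by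
  induction k with
  | zero => simp [wrep]
  | succ k ih => rw [wrep_succ, wcat_append, ih, ← wpow_eq_wcat]

theorem wpow_wrep (v : List A) {k : ℕ} (hk : 0 < k) : wpow (wrep v k) = wpow v := by
  rcases eq_or_ne v [] with rfl | hv
  · simp [wrep]
  · exact eq_of_eq_wcat_of_eq_wcat (wrep_ne_nil hv hk) (wpow_eq_wcat _)
      (wcat_wrep_wpow v k).symm

theorem upw_wrep (u v : List A) {k : ℕ} (hk : 0 < k) : upw u (wrep v k) = upw u v := by
  rw [upw, upw, wpow_wrep v hk]

end Repetition

section Invariance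

variable {A : Type} {L : Set (ℕ → A)} {u : List A}

theorem UInv.append {x y : List A} (hx : UInv L u x) (hy : UInv L u y) : UInv L u (x ++ y) := by
  intro w
  rw [hy w, ← List.append_assoc, wcat_append (u ++ x), wcat_append u y, hx]

theorem UInv.wrep {x : List A} (hx : UInv L u x) {k : ℕ} (hk : 0 < k) :
    UInv L u (wrep x k) := by
  obtain ⟨k, rfl⟩ := Nat.exists_eq_add_of_lt hk
  induction k with
  | zero => simpa using hx
  | succ k ih => rw [wrep_succ]; exact hx.append (ih (Nat.succ_pos _))

theorem UInv.mem_upw_append_comm [Inhabited A] {a : List A} (ha : UInv L u a) (b : List A) :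
    upw u (a ++ b) ∈ L ↔ upw u (b ++ a) ∈ L := by
  rw [upw, upw, wpow_append, ← wcat_append]
  exact (ha _).symm

end Invariance

section Runs

variable {A Q : Type} (δ : Q → A → Q)

theorem runOf_succ (q : Q) (w : ℕ → A) (n : ℕ) :
    runOf δ q w (n + 1) = runOf δ (δ q (w 0)) (fun k => w (k + 1)) n := by
  induction n with
  | zero => rfl
  | succ n ih => rw [runOf, ih, runOf]

theorem runOf_wcat_length_add (q : Q) (x : List A) (w : ℕ → A) (n : ℕ) :
    runOf δ q (wcat x w) (x.length + n) = runOf δ (x.foldl δ q) w n := by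
  induction x generalizing q with
  | nil => simp
  | cons a x ih =>
    rw [List.length_cons, Nat.add_right_comm, runOf_succ, wcat_cons_zero, wcat_cons_succ, ih]
    rfl

theorem infSet_wcat (q : Q) (x : List A) (w : ℕ → A) :
    infSet (runOf δ q (wcat x w)) = infSet (runOf δ (x.foldl δ q) w) := by
  ext p
  constructor
  · intro hp n
    obtain ⟨m, hm, hrm⟩ := hp (x.length + n)
    refine ⟨m - x.length, by omega, ?_⟩
    rwa [← runOf_wcat_length_add, Nat.add_sub_cancel' (by omega)]
  · intro hp n
    obtain ⟨m, hm, hrm⟩ := hp n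
    exact ⟨x.length + m, by omega, by rwa [runOf_wcat_length_add]⟩

theorem infSet_of_periodic {r : ℕ → Q} {p : ℕ} (hr : Function.Periodic r p) (hp : 0 < p) :
    infSet r = r '' Set.Iio p := by
  ext q
  constructor
  · intro hq
    obtain ⟨m, -, rfl⟩ := hq 0
    exact ⟨m % p, Nat.mod_lt m hp, hr.map_mod_nat m⟩
  · rintro ⟨m, -, rfl⟩ n
    exact ⟨m + n * p, by nlinarith, hr.nat_mul n m⟩

/-- The states at which the letters of `w` are read, starting from `q`. -/
def visited : Q → List A → Set Q
  | _, [] => ∅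
  | q, a :: w => insert q (visited (δ q a) w)

theorem visited_append (q : Q) (x y : List A) :
    visited δ q (x ++ y) = visited δ q x ∪ visited δ (x.foldl δ q) y := by
  induction x generalizing q with
  | nil => simp [visited]
  | cons a x ih => simp [visited, ih, Set.insert_union]

theorem mem_visited_iff (q p : Q) (x : List A) (w : ℕ → A) :
    p ∈ visited δ q x ↔ ∃ m < x.length, runOf δ q (wcat x w) m = p := by
  induction x generalizing q with
  | nil => simp [visited]
  | cons a x ih =>
    simp only [visited, Set.mem_insert_iff, ih, List.length_cons]
    constructor
    · rintro (rfl | ⟨m, hm, rfl⟩)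
      · exact ⟨0, by omega, rfl⟩
      · refine ⟨m + 1, by omega, ?_⟩
        rw [runOf_succ, wcat_cons_zero, wcat_cons_succ]
    · rintro ⟨_ | m, hm, rfl⟩
      · exact Or.inl rfl
      · refine Or.inr ⟨m, by omega, ?_⟩
        rw [runOf_succ, wcat_cons_zero, wcat_cons_succ]

theorem infSet_runOf_wpow [Inhabited A] {q : Q} {x : List A} (hx : x ≠ [])
    (hq : x.foldl δ q = q) : infSet (runOf δ q (wpow x)) = visited δ q x := by
  have hunfold : runOf δ q (wpow x) = runOf δ q (wcat x (wpow x)) :=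
    congrArg _ (wpow_eq_wcat x)
  have hper : Function.Periodic (runOf δ q (wpow x)) x.length := fun n => by
    rw [hunfold, add_comm, runOf_wcat_length_add, hq, ← hunfold]
  ext p
  rw [infSet_of_periodic hper (List.length_pos_iff.mpr hx), mem_visited_iff δ q p x (wpow x),
    hunfold]
  rfl

end Runs

section Profiles

/-- The transition profile of a word: where it leads from each state, and which states it
visits on the way. -/
@[ext]
structure Profile (Q : Type) where
  target : Q → Q
  visits : Q → Set Q

namespace Profile

variable {Q : Type}

instance : Monoid (Profile Q) where
  mul e f := ⟨f.target ∘ e.target, fun q => e.visits q ∪ f.visits (e.target q)⟩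
  one := ⟨id, fun _ => ∅⟩
  mul_assoc _ _ _ := Profile.ext rfl (funext fun _ => Set.union_assoc _ _ _)
  one_mul _ := Profile.ext rfl (funext fun _ => Set.empty_union _)
  mul_one _ := Profile.ext rfl (funext fun _ => Set.union_empty _)

instance [Finite Q] : Finite (Profile Q) :=
  Finite.of_injective (fun e : Profile Q => (e.target, e.visits)) fun e f h => by
    cases e; cases f; cases h; rfl

variable {A : Type}

def ofWord (δ : Q → A → Q) (w : List A) : Profile Q :=
  ⟨fun q => w.foldl δ q, fun q => visited δ q w⟩

theorem ofWord_append (δ : Q → A → Q) (x y : List A) :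
    ofWord δ (x ++ y) = ofWord δ x * ofWord δ y :=
  Profile.ext (funext fun _ => List.foldl_append) (funext fun q => visited_append δ q x y)

theorem ofWord_wrep (δ : Q → A → Q) (w : List A) (k : ℕ) :
    ofWord δ (wrep w k) = ofWord δ w ^ k := by
  induction k with
  | zero => exact Profile.ext rfl (funext fun _ => rfl)
  | succ k ih => rw [wrep_succ, ofWord_append, ih, pow_succ']

def Accepts (α : Set (Set Q)) (q : Q) (e : Profile Q) : Prop := e.visits (e.target q) ∈ α

end Profile

theorem exists_isIdempotentElem_pow {M : Type} [Monoid M] [Finite M] (x : M) :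
    ∃ n, 0 < n ∧ IsIdempotentElem (x ^ n) := by
  obtain ⟨i, j, hne, hij⟩ := Finite.exists_ne_map_eq_of_infinite (fun n : ℕ => x ^ n)
  wlog hlt : i < j generalizing i j
  · exact this j i hne.symm hij.symm (by omega)
  obtain ⟨p, rfl⟩ := Nat.exists_eq_add_of_lt hlt
  have hper : ∀ t s, i ≤ s → x ^ (s + t * (p + 1)) = x ^ s := by
    intro t
    induction t with
    | zero => simp
    | succ t ih =>
      intro s hs
      obtain ⟨d, rfl⟩ := Nat.exists_eq_add_of_le hs
      calc x ^ (i + d + (t + 1) * (p + 1))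
          = x ^ (i + p + 1) * x ^ (d + t * (p + 1)) := by rw [← pow_add]; ring_nf
        _ = x ^ (i + d) := by rw [← hij, ← pow_add, ← add_assoc, ih _ (by omega)]
  refine ⟨(i + 1) * (p + 1), by positivity, ?_⟩
  rw [IsIdempotentElem, ← pow_add, hper _ _ (by nlinarith)]

theorem IsIdempotentElem.mul_mul_pow {M : Type} [Monoid M] {e : M} (he : IsIdempotentElem e)
    (x : M) {m : ℕ} (hm : m ≠ 0) : e * (e * x) ^ m = (e * x) ^ m := by
  obtain ⟨m, rfl⟩ := Nat.exists_eq_succ_of_ne_zero hm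
  rw [pow_succ', ← mul_assoc, ← mul_assoc, he.eq]

end Profiles

section Colors

open Profile

variable {A Q : Type} [Inhabited A] {L : Set (ℕ → A)} {δ : Q → A → Q} {q₀ : Q}
  {α : Set (Set Q)} {u : List A}

theorem mem_upw_iff_accepts (hL : ∀ w, w ∈ L ↔ infSet (runOf δ q₀ w) ∈ α) {w : List A}
    (hw : w ≠ []) (he : IsIdempotentElem (ofWord δ w)) :
    upw u w ∈ L ↔ (ofWord δ w).Accepts α (u.foldl δ q₀) := by
  have hloop : w.foldl δ (w.foldl δ (u.foldl δ q₀)) = w.foldl δ (u.foldl δ q₀) :=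
    congrArg (fun e : Profile Q => e.target (u.foldl δ q₀)) he
  rw [hL, upw, infSet_wcat, wpow_eq_wcat, infSet_wcat, infSet_runOf_wpow δ hw hloop]
  rfl

/-- `w ++ w'` and `w' ++ w` realize the two profiles and are rotations of each other. -/
theorem accepts_iff_of_mul_eq (hL : ∀ w, w ∈ L ↔ infSet (runOf δ q₀ w) ∈ α) {w w' : List A}
    (hw : w ≠ []) (hinv : UInv L u w) (he : IsIdempotentElem (ofWord δ w))
    (he' : IsIdempotentElem (ofWord δ w')) (h₁ : ofWord δ w * ofWord δ w' = ofWord δ w')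
    (h₂ : ofWord δ w' * ofWord δ w = ofWord δ w) :
    (ofWord δ w).Accepts α (u.foldl δ q₀) ↔ (ofWord δ w').Accepts α (u.foldl δ q₀) := by
  have hww' : ofWord δ (w ++ w') = ofWord δ w' := by rw [ofWord_append, h₁]
  have hw'w : ofWord δ (w' ++ w) = ofWord δ w := by rw [ofWord_append, h₂]
  rw [← hww', ← hw'w, ← mem_upw_iff_accepts hL (by simp [hw]) (hw'w ▸ he),
    ← mem_upw_iff_accepts hL (by simp [hw]) (hww' ▸ he')]
  exact (hinv.mem_upw_append_comm w').symm

/-- For idempotent `e` this is the size of the right ideal `e * Profile Q`. -/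
noncomputable def leftFixedCard (e : Profile Q) : ℕ := {f | e * f = f}.ncard

theorem leftFixedCard_lt [Finite Q] (hL : ∀ w, w ∈ L ↔ infSet (runOf δ q₀ w) ∈ α)
    {w w' : List A} (hw : w ≠ []) (hinv : UInv L u w) (he : IsIdempotentElem (ofWord δ w))
    (he' : IsIdempotentElem (ofWord δ w')) (habs : ofWord δ w * ofWord δ w' = ofWord δ w')
    (hacc : ¬((ofWord δ w').Accepts α (u.foldl δ q₀) ↔ (ofWord δ w).Accepts α (u.foldl δ q₀))) :
    leftFixedCard (ofWord δ w') < leftFixedCard (ofWord δ w) := by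
  refine Set.ncard_lt_ncard ⟨fun f (hf : _ = f) => ?_, fun hsub => hacc ?_⟩
  · change ofWord δ w * f = f
    rw [← hf, ← mul_assoc, habs]
  · exact (accepts_iff_of_mul_eq hL hw hinv he he' habs (hsub he.eq)).symm

noncomputable def colorBound (α : Set (Set Q)) (q : Q) (e : Profile Q) : ℕ :=
  2 * leftFixedCard e + if e.Accepts α q then 0 else 1

theorem even_colorBound_iff (q : Q) (e : Profile Q) :
    Even (colorBound α q e) ↔ e.Accepts α q := by
  unfold colorBound
  split_ifs with h <;> simp [h]

theorem colorAtMost_colorBound [Finite Q] (hL : ∀ w, w ∈ L ↔ infSet (runOf δ q₀ w) ∈ α)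
    {w : List A} (hw : w ≠ []) (hinv : UInv L u w) (he : IsIdempotentElem (ofWord δ w)) :
    ColorAtMost L u (colorBound α (u.foldl δ q₀) (ofWord δ w)) w := by
  induction hn : leftFixedCard (ofWord δ w) using Nat.strong_induction_on generalizing w with
  | _ n ih =>
  rw [ColorAtMost]
  intro z hz
  obtain ⟨m, hm, he'⟩ := exists_isIdempotentElem_pow (ofWord δ (w ++ z))
  rw [← ofWord_wrep] at he'
  have hw' : wrep (w ++ z) m ≠ [] := wrep_ne_nil (by simp [hw]) hm
  have habs : ofWord δ w * ofWord δ (wrep (w ++ z) m) = ofWord δ (wrep (w ++ z) m) := by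
    rw [ofWord_wrep, ofWord_append]
    exact he.mul_mul_pow _ hm.ne'
  have hmem : upw u (w ++ z) ∈ L ↔ (ofWord δ (wrep (w ++ z) m)).Accepts α (u.foldl δ q₀) := by
    rw [← upw_wrep u _ hm, mem_upw_iff_accepts hL hw' he']
  by_cases hacc : (ofWord δ (wrep (w ++ z) m)).Accepts α (u.foldl δ q₀) ↔
      (ofWord δ w).Accepts α (u.foldl δ q₀)
  · exact Or.inl (by rw [hmem, hacc, even_colorBound_iff])
  · have hlt := leftFixedCard_lt hL hw hinv he he' habs hacc
    refine Or.inr ⟨m, hm, ⟨colorBound α (u.foldl δ q₀) (ofWord δ (wrep (w ++ z) m)), ?_⟩,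
      ih _ (hn ▸ hlt) hw' (hz.wrep hm) he' rfl⟩
    unfold colorBound
    split_ifs <;> omega

theorem exists_colorAtMost (hreg : OmegaRegular L) {w : List A} (hinv : UInv L u w) :
    ∃ c, ColorAtMost L u c w := by
  obtain ⟨Q, _, q₀, δ, α, hL⟩ := hreg
  refine ⟨2 * Nat.card (Profile Q) + 2 + if upw u w ∈ L then 0 else 1, ?_⟩
  rw [ColorAtMost]
  intro z hz
  rcases eq_or_ne (w ++ z) [] with hwz | hwz
  · obtain ⟨rfl, rfl⟩ := List.append_eq_nil_iff.mp hwz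
    refine Or.inl ?_
    split_ifs with h <;> simp [h, Nat.even_add_one]
  · obtain ⟨m, hm, he⟩ := exists_isIdempotentElem_pow (ofWord δ (w ++ z))
    rw [← ofWord_wrep] at he
    refine Or.inr ⟨m, hm, ⟨colorBound α (u.foldl δ q₀) (ofWord δ (wrep (w ++ z) m)), ?_⟩,
      colorAtMost_colorBound hL (wrep_ne_nil hwz hm) (hz.wrep hm) he⟩
    have := Set.ncard_le_card {f | ofWord δ (wrep (w ++ z) m) * f = f}
    unfold colorBound leftFixedCard
    split_ifs <;> omega

end Colors

section NaturalColor

variable {A : Type} [Inhabited A] {L : Set (ℕ → A)} {u : List A}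

theorem ncol_of_uInv {v : List A} (h : UInv L u v) :
    ncol L u v = ((sInf {c | ColorAtMost L u c v} : ℕ) : WithBot ℕ) :=
  if_pos ⟨[], by rwa [List.append_nil]⟩

theorem ColorAtMost.append {c : ℕ} {v : List A} (h : ColorAtMost L u c v) (z : List A) :
    ColorAtMost L u c (v ++ z) := by
  rw [ColorAtMost] at h ⊢
  intro z' hz'
  simpa only [List.append_assoc] using h (z ++ z') (by rwa [← List.append_assoc])

theorem even_sInf_colorAtMost_iff (hreg : OmegaRegular L) {v : List A} (h : UReliable L u v) :
    Even (sInf {c | ColorAtMost L u c v}) ↔ upw u v ∈ L := by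
  have hmin : ColorAtMost L u (sInf {c | ColorAtMost L u c v}) v :=
    Nat.sInf_mem (exists_colorAtMost hreg h.1)
  rw [ColorAtMost] at hmin
  rcases hmin [] (by rw [List.append_nil]; exact h.1) with hpar | ⟨i, hi, c, hc⟩
  · rw [List.append_nil] at hpar
    exact hpar.symm
  · rw [List.append_nil] at hc
    have hstable : sInf {c | ColorAtMost L u c v} = sInf {c | ColorAtMost L u c (wrep v i)} := by
      have := h.2 i hi
      rw [ncol_of_uInv h.1, ncol_of_uInv (h.1.wrep hi)] at this
      exact_mod_cast this
    have hle : sInf {c | ColorAtMost L u c (wrep v i)} ≤ c := Nat.sInf_le hc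
    have hlt := c.isLt
    omega

end NaturalColor

theorem color_strictly_decreasing_general {A : Type} [Inhabited A] (L : Set (ℕ → A))
    (hreg : OmegaRegular L) (u v z : List A)
    (h1 : UReliable L u v) (h2 : UReliable L u (v ++ z))
    (halt : upw u v ∈ L ↔ upw u (v ++ z) ∉ L) :
    ncol L u (v ++ z) < ncol L u v := by
  have hle : sInf {c | ColorAtMost L u c (v ++ z)} ≤ sInf {c | ColorAtMost L u c v} :=
    Nat.sInf_le ((Nat.sInf_mem (exists_colorAtMost hreg h1.1)).append z)
  have hne : sInf {c | ColorAtMost L u c (v ++ z)} ≠ sInf {c | ColorAtMost L u c v} := by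
    intro heq
    have hv := even_sInf_colorAtMost_iff hreg h1
    rw [← heq, even_sInf_colorAtMost_iff hreg h2] at hv
    tauto
  rw [ncol_of_uInv h1.1, ncol_of_uInv h2.1]
  exact_mod_cast hle.lt_of_ne hne

/-- strictly decreasing colors along alternating reliable extensions. -/
theorem color_strictly_decreasing {A : Type} [Inhabited A] (L : Set (ℕ → A))
    (hreg : OmegaRegular L) (u v z : List A) (hv : v ≠ []) (hz : z ≠ [])
    (h1 : UReliable L u v) (h2 : UReliable L u (v ++ z))
    (halt : upw u v ∈ L ↔ upw u (v ++ z) ∉ L) :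
    ncol L u (v ++ z) < ncol L u v :=
  color_strictly_decreasing_general L hreg u v z h1 h2 halt
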